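/- Under the stated assumptions, the energy functional I is coercive on S: for every R ∈ ℝ there exists ρ > 0 such that I(u,v) ≥ R for all (u,v) ∈ S with ‖u‖_{X₀} + ‖v‖_{X₀} ≥ ρ. -/

import Mathlib

/-!
If `1 ≤ λ < ‖u‖_{X₀}` then `λ` is not admissible in the Luxemburg infimum, so the Gagliardo
modular at `λ` exceeds `1`; as `λ^{p(x,y)} / p(x,y) ≥ λ^{p⁻} / p⁺`, this gives
`δ(u) ≥ λ^{p⁻} / p⁺`, and with `M̃ᵢ(t) ≥ (m / γ) t^γ` the Kirchhoff term of the larger of `u`, `v`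
grows like `(‖u‖_{X₀} + ‖v‖_{X₀})^{p⁻ γ}`, a power above `1`. The other terms grow at most
linearly: `H` is bounded, and Young's inequality `|st| ≤ |s|^{q} + |t|^{p̄}` integrated against the
Luxemburg modulars gives `∫_Ω a u ≤ 2 λ (C ‖u‖_{X₀} + 1)` for any `λ` admissible for `a`, through
the embedding.
-/

open MeasureTheory ENNReal Filter

/-- The modular `ρ_λ(u) = ∬_{ℝ^{2N}} |u(x) − u(y)|^{p(x,y)} /
(λ^{p(x,y)} |x − y|^{N + p(x,y)s(x,y)}) dx dy`, as a value in `[0,∞]`. -/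
noncomputable def fracModular (N : ℕ)
    (p s : EuclideanSpace ℝ (Fin N) × EuclideanSpace ℝ (Fin N) → ℝ)
    (lam : ℝ) (u : EuclideanSpace ℝ (Fin N) → ℝ) : ℝ≥0∞ :=
  ∫⁻ z : EuclideanSpace ℝ (Fin N) × EuclideanSpace ℝ (Fin N),
    ENNReal.ofReal
      (|u z.1 - u z.2| ^ p z / (lam ^ p z * ‖z.1 - z.2‖ ^ ((N : ℝ) + p z * s z)))

/-- The Gagliardo–Luxemburg norm `‖u‖_{X₀} = inf { λ > 0 : ρ_λ(u) ≤ 1 }`. -/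
noncomputable def fracNorm (N : ℕ)
    (p s : EuclideanSpace ℝ (Fin N) × EuclideanSpace ℝ (Fin N) → ℝ)
    (u : EuclideanSpace ℝ (Fin N) → ℝ) : ℝ :=
  sInf {lam : ℝ | 0 < lam ∧ fracModular N p s lam u ≤ 1}

/-- `δ(u) = ∬_{ℝ^{2N}} (1/p(x,y)) |u(x) − u(y)|^{p(x,y)} / |x − y|^{N + p(x,y)s(x,y)} dx dy`. -/
noncomputable def deltaModular (N : ℕ)
    (p s : EuclideanSpace ℝ (Fin N) × EuclideanSpace ℝ (Fin N) → ℝ)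
    (u : EuclideanSpace ℝ (Fin N) → ℝ) : ℝ≥0∞ :=
  ∫⁻ z : EuclideanSpace ℝ (Fin N) × EuclideanSpace ℝ (Fin N),
    ENNReal.ofReal
      (1 / p z * (|u z.1 - u z.2| ^ p z / ‖z.1 - z.2‖ ^ ((N : ℝ) + p z * s z)))

/-- The Luxemburg norm `‖w‖_{r(·)} = inf { λ > 0 : ∫_Ω |w(x)/λ|^{r(x)} dx ≤ 1 }` on `Ω`. -/
noncomputable def luxNorm {N : ℕ} (Ω : Set (EuclideanSpace ℝ (Fin N)))
    (r : EuclideanSpace ℝ (Fin N) → ℝ) (w : EuclideanSpace ℝ (Fin N) → ℝ) : ℝ :=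
  sInf {lam : ℝ | 0 < lam ∧ ∫⁻ x in Ω, ENNReal.ofReal (|w x / lam| ^ r x) ≤ 1}

/-- Membership in `X₀`: measurable, vanishing a.e. outside `Ω`, with finite norm
(i.e. some `λ > 0` is admissible in the Luxemburg infimum). -/
def memX0 (N : ℕ)
    (p s : EuclideanSpace ℝ (Fin N) × EuclideanSpace ℝ (Fin N) → ℝ)
    (Ω : Set (EuclideanSpace ℝ (Fin N))) (u : EuclideanSpace ℝ (Fin N) → ℝ) : Prop :=
  Measurable u ∧ (∀ᵐ x : EuclideanSpace ℝ (Fin N), x ∉ Ω → u x = 0) ∧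
    ∃ lam > (0 : ℝ), fracModular N p s lam u ≤ 1

/-- The energy functional
`I(u,v) = M̃₁(δ(u)) + M̃₂(δ(v)) − ∫_Ω H(u,v) − ∫_Ω a u − ∫_Ω b v`,
where `M̃ᵢ(t) = ∫_0^t Mᵢ(τ) dτ`. -/
noncomputable def energy (N : ℕ)
    (p s : EuclideanSpace ℝ (Fin N) × EuclideanSpace ℝ (Fin N) → ℝ)
    (Ω : Set (EuclideanSpace ℝ (Fin N))) (M₁ M₂ : ℝ → ℝ) (H : ℝ → ℝ → ℝ)
    (a b : EuclideanSpace ℝ (Fin N) → ℝ) (u v : EuclideanSpace ℝ (Fin N) → ℝ) : ℝ :=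
  (∫ τ in Set.Ioo (0 : ℝ) ((deltaModular N p s u).toReal), M₁ τ) +
    (∫ τ in Set.Ioo (0 : ℝ) ((deltaModular N p s v).toReal), M₂ τ) -
    (∫ x in Ω, H (u x) (v x)) - (∫ x in Ω, a x * u x) - ∫ x in Ω, b x * v x

lemma bddBelow_range_of_iInf_ne_zero {ι : Sort*} {f : ι → ℝ} (h : ⨅ i, f i ≠ 0) :
    BddBelow (Set.range f) := by
  by_contra hf
  exact h (Real.iInf_of_not_bddBelow hf)

lemma eventually_add_le_mul_div_rpow {c d α : ℝ} (hc : 0 < c) (hd : 0 < d) (hα : 1 < α)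
    (K K₀ : ℝ) : ∀ᶠ T in atTop, K * T + K₀ ≤ c * (T / d) ^ α := by
  have hgrowth : Tendsto (fun T : ℝ => T * (c / d * (T / d) ^ (α - 1) - K)) atTop atTop :=
    tendsto_id.atTop_mul_atTop₀ <| tendsto_atTop_add_const_right _ _ <|
      ((tendsto_rpow_atTop (by linarith)).comp (tendsto_id.atTop_div_const hd)).const_mul_atTop
        (by positivity)
  filter_upwards [hgrowth.eventually_ge_atTop K₀, eventually_gt_atTop 0] with T hT hT0
  have hsplit : c * (T / d) ^ α = T * (c / d * (T / d) ^ (α - 1)) := by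
    have hpow : (T / d) ^ α = T / d * (T / d) ^ (α - 1) := by
      rw [← Real.rpow_one_add' (by positivity) (by linarith), add_sub_cancel]
    rw [hpow]
    ring
  rw [hsplit]
  linarith

lemma mul_rpow_le_setIntegral_Ioo {M : ℝ → ℝ} {m γ : ℝ} (hγ : 0 < γ)
    (hlow : ∀ t : ℝ, 0 < t → m * t ^ (γ - 1) ≤ M t)
    (hint : ∀ t : ℝ, 0 < t → IntegrableOn M (Set.Ioo 0 t))
    {t : ℝ} (ht : 0 ≤ t) :
    m / γ * t ^ γ ≤ ∫ τ in Set.Ioo (0 : ℝ) t, M τ := by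
  rcases ht.eq_or_lt with rfl | ht
  · simp [Real.zero_rpow hγ.ne']
  have hpow : ∫ τ in Set.Ioo (0 : ℝ) t, m * τ ^ (γ - 1) = m / γ * t ^ γ := by
    rw [← integral_Ioc_eq_integral_Ioo, ← intervalIntegral.integral_of_le ht.le,
      intervalIntegral.integral_const_mul, integral_rpow (Or.inl (by linarith)),
      sub_add_cancel, Real.zero_rpow hγ.ne']
    ring
  have hpow_int : IntegrableOn (fun τ : ℝ => m * τ ^ (γ - 1)) (Set.Ioo 0 t) :=
    (((intervalIntegrable_iff_integrableOn_Ioc_of_le ht.le).mp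
      (intervalIntegral.intervalIntegrable_rpow' (by linarith))).mono_set
        Set.Ioo_subset_Ioc_self).const_mul m
  rw [← hpow]
  exact setIntegral_mono_on hpow_int (hint t ht) measurableSet_Ioo fun τ hτ => hlow τ hτ.1

lemma rpow_le_max_rpow {l e lo hi : ℝ} (hl : 0 < l) (hlo : lo ≤ e) (hhi : e ≤ hi) :
    l ^ e ≤ max (l ^ lo) (l ^ hi) := by
  rcases le_total 1 l with h | h
  · exact le_max_of_le_right (Real.rpow_le_rpow_of_exponent_le h hhi)
  · exact le_max_of_le_left (Real.rpow_le_rpow_of_exponent_ge hl h hlo)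

lemma abs_clamp (a c : ℝ) (hc : 0 ≤ c) : |max (min a c) (-c)| = min |a| c := by
  rcases abs_cases a with ⟨h, _⟩ | ⟨h, _⟩ <;> rw [h] <;> grind

lemma abs_mul_le_rpow_add_rpow {P Q : ℝ} (hPQ : P.HolderConjugate Q) (x y : ℝ) :
    |x * y| ≤ |x| ^ P + |y| ^ Q := by
  rw [abs_mul]
  refine (Real.young_inequality_of_nonneg (abs_nonneg x) (abs_nonneg y) hPQ).trans
    (add_le_add ?_ ?_)
  · exact div_le_self (by positivity) hPQ.lt.le
  · exact div_le_self (by positivity) hPQ.symm.lt.le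

-- `luxNorm Ω r w` unfolds to `sInf {l | 0 < l ∧ luxModular (volume.restrict Ω) r w l ≤ 1}`.
noncomputable def luxModular {X : Type*} [MeasurableSpace X] (μ : Measure X) (r w : X → ℝ)
    (l : ℝ) : ℝ≥0∞ :=
  ∫⁻ x, ENNReal.ofReal (|w x / l| ^ r x) ∂μ

section LuxModular

variable {X : Type*} [MeasurableSpace X] {μ : Measure X} {r : X → ℝ}

lemma luxModular_anti (hr : ∀ x, 0 ≤ r x) (w : X → ℝ) {l l' : ℝ} (hl : 0 < l)
    (hll' : l ≤ l') :
    luxModular μ r w l' ≤ luxModular μ r w l := by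
  refine lintegral_mono fun x => ENNReal.ofReal_le_ofReal <|
    Real.rpow_le_rpow (abs_nonneg _) ?_ (hr x)
  rw [abs_div, abs_div, abs_of_pos hl, abs_of_pos (hl.trans_le hll')]
  exact div_le_div_of_nonneg_left (abs_nonneg _) hl hll'

lemma exists_luxModular_le_one_of_abs_le [IsFiniteMeasure μ] (hr : ∀ x, 1 ≤ r x)
    {w : X → ℝ} {c : ℝ} (hw : ∀ x, |w x| ≤ c) : ∃ l > 0, luxModular μ r w l ≤ 1 := by
  set V := μ.real Set.univ
  have hV : 0 ≤ V := measureReal_nonneg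
  have hl : 0 < (|c| + 1) * (V + 1) := by positivity
  refine ⟨_, hl, ?_⟩
  have hpt : ∀ x, |w x / ((|c| + 1) * (V + 1))| ^ r x ≤ 1 / (V + 1) := by
    intro x
    have hsmall : |w x / ((|c| + 1) * (V + 1))| ≤ 1 / (V + 1) := by
      rw [abs_div, abs_of_pos hl, div_le_div_iff₀ hl (by positivity)]
      nlinarith [hw x, le_abs_self c]
    have hle_one : 1 / (V + 1) ≤ 1 := by
      rw [div_le_one (by positivity)]; linarith
    exact (Real.rpow_le_self_of_le_one (abs_nonneg _) (hsmall.trans hle_one) (hr x)).trans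
      hsmall
  calc luxModular μ r w ((|c| + 1) * (V + 1))
      ≤ ∫⁻ _, ENNReal.ofReal (1 / (V + 1)) ∂μ :=
        lintegral_mono fun x => ENNReal.ofReal_le_ofReal (hpt x)
    _ = ENNReal.ofReal (V / (V + 1)) := by
        rw [lintegral_const, ← ofReal_measureReal (measure_ne_top _ _),
          ← ENNReal.ofReal_mul (by positivity), div_mul_eq_mul_div, one_mul]
    _ ≤ 1 := ENNReal.ofReal_le_one.mpr ((div_le_one (by positivity)).mpr (by linarith))

lemma luxModular_le_one_of_abs_eq_min (hr : Measurable r) (hr0 : ∀ x, 0 ≤ r x) {w : X → ℝ}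
    {g : ℕ → X → ℝ} (hg : ∀ n, Measurable (g n)) (hgw : ∀ n x, |g n x| = min |w x| n)
    {l : ℝ} (hl : 0 < l) (h : ∀ n, luxModular μ r (g n) l ≤ 1) :
    luxModular μ r w l ≤ 1 := by
  have habs : ∀ n x, |g n x / l| = min |w x| n / l := fun n x => by
    rw [abs_div, hgw, abs_of_pos hl]
  have hmono : Monotone fun n x => ENNReal.ofReal (|g n x / l| ^ r x) :=
    fun n k hnk x => ENNReal.ofReal_le_ofReal <| Real.rpow_le_rpow (abs_nonneg _)
      (by rw [habs, habs]; gcongr) (hr0 x)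
  have hsup : ∀ x, ⨆ n : ℕ, ENNReal.ofReal (|g n x / l| ^ r x) =
      ENNReal.ofReal (|w x / l| ^ r x) := fun x => by
    refine le_antisymm (iSup_le fun n => ENNReal.ofReal_le_ofReal <|
      Real.rpow_le_rpow (abs_nonneg _) ?_ (hr0 x)) (le_iSup_of_le ⌈|w x|⌉₊ ?_)
    · rw [habs, abs_div, abs_of_pos hl]
      gcongr
      exact min_le_left _ _
    · rw [habs, min_eq_left (Nat.le_ceil _), abs_div, abs_of_pos hl]
  calc luxModular μ r w l = ∫⁻ x, ⨆ n : ℕ, ENNReal.ofReal (|g n x / l| ^ r x) ∂μ :=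
        lintegral_congr fun x => (hsup x).symm
    _ = ⨆ n : ℕ, luxModular μ r (g n) l :=
        lintegral_iSup (fun n => (((hg n).div_const l).abs.pow hr).ennreal_ofReal) hmono
    _ ≤ 1 := iSup_le h

lemma abs_integral_mul_le_of_luxModular_le_one {P Q : X → ℝ} (hP : Measurable P)
    (hPQ : ∀ᵐ x ∂μ, (P x).HolderConjugate (Q x)) {f g : X → ℝ} (hg : Measurable g)
    {lf lg : ℝ} (hlf : 0 < lf) (hlg : 0 < lg)
    (hfQ : luxModular μ Q f lf ≤ 1) (hgP : luxModular μ P g lg ≤ 1) :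
    |∫ x, f x * g x ∂μ| ≤ 2 * lf * lg := by
  have hpt : ∀ᵐ x ∂μ, ENNReal.ofReal ‖f x * g x‖ ≤ ENNReal.ofReal (lf * lg) *
      (ENNReal.ofReal (|f x / lf| ^ Q x) + ENNReal.ofReal (|g x / lg| ^ P x)) := by
    filter_upwards [hPQ] with x hx
    rw [← ENNReal.ofReal_add (by positivity) (by positivity),
      ← ENNReal.ofReal_mul (by positivity), Real.norm_eq_abs]
    refine ENNReal.ofReal_le_ofReal ?_
    calc |f x * g x| = lf * lg * |f x / lf * (g x / lg)| := by
          rw [abs_mul, abs_mul, abs_div, abs_div, abs_of_pos hlf, abs_of_pos hlg]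
          field_simp
      _ ≤ _ :=
          mul_le_mul_of_nonneg_left (abs_mul_le_rpow_add_rpow hx.symm _ _) (by positivity)
  have hlint : ∫⁻ x, ENNReal.ofReal ‖f x * g x‖ ∂μ ≤ ENNReal.ofReal (2 * lf * lg) :=
    calc ∫⁻ x, ENNReal.ofReal ‖f x * g x‖ ∂μ
        ≤ ∫⁻ x, ENNReal.ofReal (lf * lg) *
          (ENNReal.ofReal (|f x / lf| ^ Q x) + ENNReal.ofReal (|g x / lg| ^ P x)) ∂μ :=
          lintegral_mono_ae hpt
      _ = ENNReal.ofReal (lf * lg) * (luxModular μ Q f lf + luxModular μ P g lg) := by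
          rw [lintegral_const_mul' _ _ ENNReal.ofReal_ne_top,
            lintegral_add_right _ ((hg.div_const lg).abs.pow hP).ennreal_ofReal]
          rfl
      _ ≤ ENNReal.ofReal (lf * lg) * 2 := by
          gcongr
          exact (add_le_add hfQ hgP).trans_eq one_add_one_eq_two
      _ = ENNReal.ofReal (2 * lf * lg) := by
          rw [← ENNReal.ofReal_ofNat 2, ← ENNReal.ofReal_mul (by positivity)]
          ring_nf
  calc |∫ x, f x * g x ∂μ| = ‖∫ x, f x * g x ∂μ‖ := (Real.norm_eq_abs _).symm
    _ ≤ (∫⁻ x, ENNReal.ofReal ‖f x * g x‖ ∂μ).toReal :=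
        norm_integral_le_lintegral_norm _
    _ ≤ 2 * lf * lg := ENNReal.toReal_le_of_le_ofReal (by positivity) hlint

end LuxModular

section Fractional

variable {N : ℕ} {p s : EuclideanSpace ℝ (Fin N) × EuclideanSpace ℝ (Fin N) → ℝ}
  {u : EuclideanSpace ℝ (Fin N) → ℝ}

lemma fracNorm_nonneg : 0 ≤ fracNorm N p s u :=
  Real.sInf_nonneg fun _ hl => hl.1.le

lemma one_lt_fracModular_of_lt_fracNorm {l : ℝ} (hl : 0 < l) (hlu : l < fracNorm N p s u) :
    1 < fracModular N p s l u := by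
  by_contra! h
  exact hlu.not_ge (csInf_le ⟨0, fun _ hl' => hl'.1.le⟩ ⟨hl, h⟩)

lemma fracModular_comp_le (hp : ∀ z, 0 ≤ p z) {φ : ℝ → ℝ} (hφ : LipschitzWith 1 φ)
    {l : ℝ} (hl : 0 ≤ l) :
    fracModular N p s l (fun x => φ (u x)) ≤ fracModular N p s l u := by
  refine lintegral_mono fun z => ENNReal.ofReal_le_ofReal <|
    div_le_div_of_nonneg_right ?_ (by positivity)
  refine Real.rpow_le_rpow (abs_nonneg _) ?_ (hp z)
  simpa [Real.dist_eq] using hφ.dist_le_mul (u z.1) (u z.2)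

lemma fracNorm_comp_le (hp : ∀ z, 0 ≤ p z) {φ : ℝ → ℝ} (hφ : LipschitzWith 1 φ)
    (hu : ∃ l > 0, fracModular N p s l u ≤ 1) :
    fracNorm N p s (fun x => φ (u x)) ≤ fracNorm N p s u :=
  csInf_le_csInf ⟨0, fun _ hl => hl.1.le⟩ hu fun _ hl =>
    ⟨hl.1, (fracModular_comp_le hp hφ hl.1.le).trans hl.2⟩

lemma memX0_comp (hp : ∀ z, 0 ≤ p z) {Ω : Set (EuclideanSpace ℝ (Fin N))} {φ : ℝ → ℝ}
    (hφ : LipschitzWith 1 φ) (hφ0 : φ 0 = 0) (hu : memX0 N p s Ω u) :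
    memX0 N p s Ω (fun x => φ (u x)) := by
  obtain ⟨hum, hu0, l, hl, hlu⟩ := hu
  refine ⟨hφ.continuous.measurable.comp hum, ?_, l, hl,
    (fracModular_comp_le hp hφ hl.le).trans hlu⟩
  filter_upwards [hu0] with x hx hxΩ
  rw [hx hxΩ, hφ0]

lemma deltaModular_eq_lintegral_mul {l : ℝ} (hl : 0 < l) :
    deltaModular N p s u = ∫⁻ z, ENNReal.ofReal (l ^ p z / p z) * ENNReal.ofReal
      (|u z.1 - u z.2| ^ p z / (l ^ p z * ‖z.1 - z.2‖ ^ ((N : ℝ) + p z * s z))) := by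
  refine lintegral_congr fun z => ?_
  rw [← ENNReal.ofReal_mul' (by positivity)]
  congr 1
  have : l ^ p z ≠ 0 := (Real.rpow_pos_of_pos hl _).ne'
  field_simp

lemma ofReal_mul_fracModular_le_deltaModular {l c : ℝ} (hl : 0 < l)
    (hc : ∀ z, c ≤ l ^ p z / p z) :
    ENNReal.ofReal c * fracModular N p s l u ≤ deltaModular N p s u := by
  rw [deltaModular_eq_lintegral_mul hl, fracModular,
    ← lintegral_const_mul' _ _ ENNReal.ofReal_ne_top]
  exact lintegral_mono fun z => by gcongr; exact hc z

lemma deltaModular_le_ofReal_mul_fracModular {l c : ℝ} (hl : 0 < l)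
    (hc : ∀ z, l ^ p z / p z ≤ c) :
    deltaModular N p s u ≤ ENNReal.ofReal c * fracModular N p s l u := by
  rw [deltaModular_eq_lintegral_mul hl, fracModular,
    ← lintegral_const_mul' _ _ ENNReal.ofReal_ne_top]
  exact lintegral_mono fun z => by gcongr; exact hc z

lemma deltaModular_ne_top {pm pp : ℝ} (hpm0 : 0 < pm) (hpm : ∀ z, pm ≤ p z)
    (hpp : ∀ z, p z ≤ pp) (hu : ∃ l > 0, fracModular N p s l u ≤ 1) :
    deltaModular N p s u ≠ ⊤ := by
  obtain ⟨l, hl, hlu⟩ := hu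
  refine ne_top_of_le_ne_top (ENNReal.mul_ne_top ENNReal.ofReal_ne_top ENNReal.one_ne_top)
    ((deltaModular_le_ofReal_mul_fracModular hl (c := max (l ^ pm) (l ^ pp) / pm)
      fun z => ?_).trans (by gcongr))
  exact div_le_div₀ (by positivity) (rpow_le_max_rpow hl (hpm z) (hpp z)) hpm0 (hpm z)

lemma ofReal_le_deltaModular_of_lt_fracNorm {pm pp : ℝ} (hpm0 : 0 < pm)
    (hpm : ∀ z, pm ≤ p z) (hpp : ∀ z, p z ≤ pp) {l : ℝ} (hl : 1 ≤ l)
    (hlu : l < fracNorm N p s u) :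
    ENNReal.ofReal (l ^ pm / pp) ≤ deltaModular N p s u := by
  have hl0 : 0 < l := by linarith
  calc ENNReal.ofReal (l ^ pm / pp) = ENNReal.ofReal (l ^ pm / pp) * 1 := (mul_one _).symm
    _ ≤ ENNReal.ofReal (l ^ pm / pp) * fracModular N p s l u := by
        gcongr; exact (one_lt_fracModular_of_lt_fracNorm hl0 hlu).le
    _ ≤ deltaModular N p s u := ofReal_mul_fracModular_le_deltaModular hl0 fun z =>
        div_le_div₀ (by positivity) (Real.rpow_le_rpow_of_exponent_le hl (hpm z))
          (hpm0.trans_le (hpm z)) (hpp z)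

end Fractional

section Embedding

variable {N : ℕ} {p s : EuclideanSpace ℝ (Fin N) × EuclideanSpace ℝ (Fin N) → ℝ}
  {Ω : Set (EuclideanSpace ℝ (Fin N))}

lemma luxModular_le_one_of_luxNorm_lt {r w : EuclideanSpace ℝ (Fin N) → ℝ}
    (hr : ∀ x, 0 ≤ r x) (hw : ∃ l > 0, luxModular (volume.restrict Ω) r w l ≤ 1) {l : ℝ}
    (hl : luxNorm Ω r w < l) :
    luxModular (volume.restrict Ω) r w l ≤ 1 := by
  obtain ⟨l', ⟨hl'0, hl'⟩, hl'l⟩ := exists_lt_of_csInf_lt hw hl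
  exact (luxModular_anti hr w hl'0 hl'l.le).trans hl'

/-- `luxNorm Ω p̄ u` may be an infimum over the empty set (junk value `0`), so `hembed` says
nothing about `u` directly; it does for the bounded truncations of `u`, and monotone convergence
passes to `u`. -/
lemma luxModular_le_one_of_memX0 (hpc : Continuous p) (hp : ∀ z, 1 ≤ p z)
    (hΩ : volume Ω ≠ ⊤) {C : ℝ} (hC : 0 ≤ C)
    (hembed : ∀ u, memX0 N p s Ω u → luxNorm Ω (fun x => p (x, x)) u ≤ C * fracNorm N p s u)
    {u : EuclideanSpace ℝ (Fin N) → ℝ} (hu : memX0 N p s Ω u) {l : ℝ}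
    (hl : C * fracNorm N p s u < l) :
    luxModular (volume.restrict Ω) (fun x => p (x, x)) u l ≤ 1 := by
  have : IsFiniteMeasure (volume.restrict Ω) := isFiniteMeasure_restrict.mpr hΩ
  have hp0 : ∀ z, 0 ≤ p z := fun z => zero_le_one.trans (hp z)
  have hclamp : ∀ n : ℕ, LipschitzWith 1 fun t : ℝ => max (min t n) (-n) :=
    fun n => (LipschitzWith.id.min_const _).max_const _
  have hU : ∀ n : ℕ, memX0 N p s Ω fun x => max (min (u x) n) (-n) :=
    fun n => memX0_comp hp0 (hclamp n) (by simp) hu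
  have hUabs : ∀ (n : ℕ) x, |max (min (u x) n) (-n)| = min |u x| n :=
    fun n x => abs_clamp _ _ n.cast_nonneg
  set U : ℕ → EuclideanSpace ℝ (Fin N) → ℝ := fun n x => max (min (u x) n) (-n)
  refine luxModular_le_one_of_abs_eq_min
    (hpc.comp (continuous_id.prodMk continuous_id)).measurable (fun x => hp0 (x, x))
    (fun n => (hU n).1) hUabs
    ((mul_nonneg hC fracNorm_nonneg).trans_lt hl) fun n => ?_
  have hUbdd : ∃ l > 0, luxModular (volume.restrict Ω) (fun x => p (x, x)) (U n) l ≤ 1 :=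
    exists_luxModular_le_one_of_abs_le (fun x => hp (x, x))
      fun x => (hUabs n x).trans_le (min_le_right _ _)
  have hUnorm : fracNorm N p s (U n) ≤ fracNorm N p s u :=
    fracNorm_comp_le hp0 (hclamp n) hu.2.2 (φ := fun t : ℝ => max (min t n) (-n))
  refine luxModular_le_one_of_luxNorm_lt (fun x => hp0 (x, x)) hUbdd ?_
  calc luxNorm Ω (fun x => p (x, x)) (U n) ≤ C * fracNorm N p s (U n) := hembed _ (hU n)
    _ ≤ C * fracNorm N p s u := mul_le_mul_of_nonneg_left hUnorm hC
    _ < l := hl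

lemma setIntegral_mul_le_of_memX0 (hpc : Continuous p) (hp : ∀ z, 1 < p z)
    (hΩm : MeasurableSet Ω) (hΩ : volume Ω ≠ ⊤) {q : EuclideanSpace ℝ (Fin N) → ℝ}
    (hq : ∀ x ∈ Ω, 1 / p (x, x) + 1 / q x = 1) {C : ℝ} (hC : 0 ≤ C)
    (hembed : ∀ u, memX0 N p s Ω u → luxNorm Ω (fun x => p (x, x)) u ≤ C * fracNorm N p s u)
    {f : EuclideanSpace ℝ (Fin N) → ℝ} {lf : ℝ} (hlf : 0 < lf)
    (hf : luxModular (volume.restrict Ω) q f lf ≤ 1)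
    {u : EuclideanSpace ℝ (Fin N) → ℝ} (hu : memX0 N p s Ω u) :
    ∫ x in Ω, f x * u x ≤ 2 * lf * (C * fracNorm N p s u + 1) := by
  have hconj : ∀ᵐ x ∂volume.restrict Ω, (p (x, x)).HolderConjugate (q x) :=
    ae_restrict_of_forall_mem hΩm fun x hx =>
      Real.holderConjugate_iff.mpr ⟨hp (x, x), by simpa only [one_div] using hq x hx⟩
  refine (le_abs_self _).trans <| abs_integral_mul_le_of_luxModular_le_one
    (hpc.comp (continuous_id.prodMk continuous_id)).measurable hconj hu.1 hlf
    (add_pos_of_nonneg_of_pos (mul_nonneg hC fracNorm_nonneg) one_pos) hf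
    (luxModular_le_one_of_memX0 hpc (fun z => (hp z).le) hΩ hC hembed hu (lt_add_one _))

end Embedding

lemma mul_rpow_le_setIntegral_deltaModular {N : ℕ}
    {p s : EuclideanSpace ℝ (Fin N) × EuclideanSpace ℝ (Fin N) → ℝ}
    {pm pp : ℝ} (hpm0 : 0 < pm) (hpm : ∀ z, pm ≤ p z) (hpp : ∀ z, p z ≤ pp)
    {M : ℝ → ℝ} {m γ : ℝ} (hm : 0 < m) (hγ : 0 < γ)
    (hlow : ∀ t : ℝ, 0 < t → m * t ^ (γ - 1) ≤ M t)
    (hint : ∀ t : ℝ, 0 < t → IntegrableOn M (Set.Ioo 0 t))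
    {Ω : Set (EuclideanSpace ℝ (Fin N))} {w : EuclideanSpace ℝ (Fin N) → ℝ}
    (hw : memX0 N p s Ω w) {l : ℝ} (hl : 1 ≤ l) (hlw : l < fracNorm N p s w) :
    m / γ / pp ^ γ * l ^ (pm * γ) ≤
      ∫ τ in Set.Ioo (0 : ℝ) (deltaModular N p s w).toReal, M τ := by
  have hpp0 : 0 < pp := hpm0.trans_le ((hpm (0, 0)).trans (hpp (0, 0)))
  have hδ : l ^ pm / pp ≤ (deltaModular N p s w).toReal :=
    (ENNReal.ofReal_le_iff_le_toReal (deltaModular_ne_top hpm0 hpm hpp hw.2.2)).mp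
      (ofReal_le_deltaModular_of_lt_fracNorm hpm0 hpm hpp hl hlw)
  calc m / γ / pp ^ γ * l ^ (pm * γ) = m / γ * (l ^ pm / pp) ^ γ := by
        rw [Real.div_rpow (by positivity) hpp0.le, ← Real.rpow_mul (by positivity)]
        ring
    _ ≤ m / γ * (deltaModular N p s w).toReal ^ γ := by gcongr
    _ ≤ _ := mul_rpow_le_setIntegral_Ioo hγ hlow hint ENNReal.toReal_nonneg

lemma mul_rpow_le_add_setIntegral_deltaModular {N : ℕ}
    {p s : EuclideanSpace ℝ (Fin N) × EuclideanSpace ℝ (Fin N) → ℝ}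
    {pm pp : ℝ} (hpm0 : 0 < pm) (hpm : ∀ z, pm ≤ p z) (hpp : ∀ z, p z ≤ pp)
    {M₁ M₂ : ℝ → ℝ} {m γ : ℝ} (hm : 0 < m) (hγ : 0 < γ)
    (hlow₁ : ∀ t : ℝ, 0 < t → m * t ^ (γ - 1) ≤ M₁ t)
    (hint₁ : ∀ t : ℝ, 0 < t → IntegrableOn M₁ (Set.Ioo 0 t))
    (hlow₂ : ∀ t : ℝ, 0 < t → m * t ^ (γ - 1) ≤ M₂ t)
    (hint₂ : ∀ t : ℝ, 0 < t → IntegrableOn M₂ (Set.Ioo 0 t))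
    {Ω : Set (EuclideanSpace ℝ (Fin N))} {u v : EuclideanSpace ℝ (Fin N) → ℝ}
    (hu : memX0 N p s Ω u) (hv : memX0 N p s Ω v)
    (hT : 4 ≤ fracNorm N p s u + fracNorm N p s v) :
    m / γ / pp ^ γ * ((fracNorm N p s u + fracNorm N p s v) / 4) ^ (pm * γ) ≤
      (∫ τ in Set.Ioo (0 : ℝ) (deltaModular N p s u).toReal, M₁ τ) +
        ∫ τ in Set.Ioo (0 : ℝ) (deltaModular N p s v).toReal, M₂ τ := by
  have h₁ : 0 ≤ ∫ τ in Set.Ioo (0 : ℝ) (deltaModular N p s u).toReal, M₁ τ :=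
    le_trans (by positivity) (mul_rpow_le_setIntegral_Ioo hγ hlow₁ hint₁ ENNReal.toReal_nonneg)
  have h₂ : 0 ≤ ∫ τ in Set.Ioo (0 : ℝ) (deltaModular N p s v).toReal, M₂ τ :=
    le_trans (by positivity) (mul_rpow_le_setIntegral_Ioo hγ hlow₂ hint₂ ENNReal.toReal_nonneg)
  have hl : 1 ≤ (fracNorm N p s u + fracNorm N p s v) / 4 := by linarith
  rcases le_total (fracNorm N p s v) (fracNorm N p s u) with h | h
  · linarith [mul_rpow_le_setIntegral_deltaModular hpm0 hpm hpp hm hγ hlow₁ hint₁ hu hl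
      (by linarith)]
  · linarith [mul_rpow_le_setIntegral_deltaModular hpm0 hpm hpp hm hγ hlow₂ hint₂ hv hl
      (by linarith)]

theorem energy_coercive_general (N : ℕ)
    (Ω : Set (EuclideanSpace ℝ (Fin N))) (hΩopen : IsOpen Ω)
    (hΩbdd : Bornology.IsBounded Ω)
    (p s : EuclideanSpace ℝ (Fin N) × EuclideanSpace ℝ (Fin N) → ℝ)
    (hpc : Continuous p)
    (hpinf : 1 < ⨅ z, p z) (hpbdd : BddAbove (Set.range p))
    (m γ : ℝ) (hm : 0 < m) (hγ : 1 / (⨅ z, p z) < γ)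
    (M₁ M₂ : ℝ → ℝ)
    (hM₁low : ∀ t : ℝ, 0 < t → m * t ^ (γ - 1) ≤ M₁ t)
    (hM₂low : ∀ t : ℝ, 0 < t → m * t ^ (γ - 1) ≤ M₂ t)
    (hM₁int : ∀ t : ℝ, 0 < t → IntegrableOn M₁ (Set.Ioo 0 t) volume)
    (hM₂int : ∀ t : ℝ, 0 < t → IntegrableOn M₂ (Set.Ioo 0 t) volume)
    (H : ℝ → ℝ → ℝ)
    (hHbdd : ∃ CH : ℝ, ∀ x y : ℝ, |H x y| ≤ CH)
    (q : EuclideanSpace ℝ (Fin N) → ℝ)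
    (hq : ∀ x ∈ Ω, 1 / p (x, x) + 1 / q x = 1)
    (a b : EuclideanSpace ℝ (Fin N) → ℝ)
    (hafin : ∃ lam > (0 : ℝ), ∫⁻ x in Ω, ENNReal.ofReal (|a x / lam| ^ q x) ≤ 1)
    (hbfin : ∃ lam > (0 : ℝ), ∫⁻ x in Ω, ENNReal.ofReal (|b x / lam| ^ q x) ≤ 1)
    (C : ℝ) (hC : 0 < C)
    (hembed : ∀ u, memX0 N p s Ω u →
      luxNorm Ω (fun x => p (x, x)) u ≤ C * fracNorm N p s u) :
    ∀ R : ℝ, ∃ ρ > (0 : ℝ), ∀ u v : EuclideanSpace ℝ (Fin N) → ℝ,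
      memX0 N p s Ω u → memX0 N p s Ω v →
      ρ ≤ fracNorm N p s u + fracNorm N p s v →
      R ≤ energy N p s Ω M₁ M₂ H a b u v := by
  intro R
  set pm := ⨅ z, p z
  set pp := ⨆ z, p z
  have hpm0 : 0 < pm := by linarith
  have hpm : ∀ z, pm ≤ p z := ciInf_le (bddBelow_range_of_iInf_ne_zero hpm0.ne')
  have hpp : ∀ z, p z ≤ pp := le_ciSup hpbdd
  have hγ0 : 0 < γ := lt_trans (by positivity) hγ
  have hα : 1 < pm * γ := by rwa [div_lt_iff₀ hpm0, mul_comm] at hγ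
  have hpp0 : 0 < pp := hpm0.trans_le ((hpm (0, 0)).trans (hpp (0, 0)))
  obtain ⟨CH, hCH⟩ := hHbdd
  obtain ⟨la, hla, hlaF⟩ := hafin
  obtain ⟨lb, hlb, hlbF⟩ := hbfin
  obtain ⟨T₀, hT₀⟩ := (eventually_add_le_mul_div_rpow (by positivity : 0 < m / γ / pp ^ γ)
    four_pos hα (2 * C * (la + lb)) (CH * volume.real Ω + 2 * la + 2 * lb + R))
    |>.exists_forall_of_atTop
  refine ⟨max T₀ 4, by positivity, fun u v hu hv hρ => ?_⟩
  have hgrowth := hT₀ _ ((le_max_left _ _).trans hρ)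
  have hkirchhoff := mul_rpow_le_add_setIntegral_deltaModular hpm0 hpm hpp hm hγ0
    hM₁low hM₁int hM₂low hM₂int hu hv ((le_max_right _ _).trans hρ)
  have hH : ∫ x in Ω, H (u x) (v x) ≤ CH * volume.real Ω :=
    (le_abs_self _).trans <| norm_setIntegral_le_of_norm_le_const (f := fun x => H (u x) (v x))
      hΩbdd.measure_lt_top fun x _ => (Real.norm_eq_abs _).trans_le (hCH (u x) (v x))
  have hp : ∀ z, 1 < p z := fun z => hpinf.trans_le (hpm z)
  have ha := setIntegral_mul_le_of_memX0 hpc hp hΩopen.measurableSet hΩbdd.measure_lt_top.ne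
    hq hC.le hembed hla hlaF hu
  have hb := setIntegral_mul_le_of_memX0 hpc hp hΩopen.measurableSet hΩbdd.measure_lt_top.ne
    hq hC.le hembed hlb hlbF hv
  have hcross : 0 ≤ C * la * fracNorm N p s v + C * lb * fracNorm N p s u :=
    add_nonneg (mul_nonneg (by positivity) fracNorm_nonneg)
      (mul_nonneg (by positivity) fracNorm_nonneg)
  rw [energy]
  linarith

theorem energy_coercive (N : ℕ) (hN : 1 ≤ N)
    (Ω : Set (EuclideanSpace ℝ (Fin N))) (hΩopen : IsOpen Ω)
    (hΩbdd : Bornology.IsBounded Ω)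
    (p s : EuclideanSpace ℝ (Fin N) × EuclideanSpace ℝ (Fin N) → ℝ)
    (hpc : Continuous p) (hsc : Continuous s)
    (hpsymm : ∀ x y, p (x, y) = p (y, x)) (hssymm : ∀ x y, s (x, y) = s (y, x))
    (hpinf : 1 < ⨅ z, p z) (hpbdd : BddAbove (Set.range p))
    (hsinf : 0 < ⨅ z, s z) (hsbdd : BddAbove (Set.range s))
    (hssup : ⨆ z, s z < 1)
    (m γ : ℝ) (hm : 0 < m) (hγ : 1 / (⨅ z, p z) < γ)
    (M₁ M₂ : ℝ → ℝ)
    (hM₁c : ContinuousOn M₁ (Set.Ioi 0)) (hM₂c : ContinuousOn M₂ (Set.Ioi 0))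
    (hM₁pos : ∀ t : ℝ, 0 < t → 0 < M₁ t) (hM₂pos : ∀ t : ℝ, 0 < t → 0 < M₂ t)
    (hM₁low : ∀ t : ℝ, 0 < t → m * t ^ (γ - 1) ≤ M₁ t)
    (hM₂low : ∀ t : ℝ, 0 < t → m * t ^ (γ - 1) ≤ M₂ t)
    (hM₁int : ∀ t : ℝ, 0 < t → IntegrableOn M₁ (Set.Ioo 0 t) volume)
    (hM₂int : ∀ t : ℝ, 0 < t → IntegrableOn M₂ (Set.Ioo 0 t) volume)
    (H : ℝ → ℝ → ℝ) (hHc : Continuous fun z : ℝ × ℝ => H z.1 z.2)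
    (hHbdd : ∃ CH : ℝ, ∀ x y : ℝ, |H x y| ≤ CH)
    (q : EuclideanSpace ℝ (Fin N) → ℝ)
    (hq : ∀ x ∈ Ω, 1 / p (x, x) + 1 / q x = 1)
    (a b : EuclideanSpace ℝ (Fin N) → ℝ) (ha : Measurable a) (hb : Measurable b)
    (hafin : ∃ lam > (0 : ℝ), ∫⁻ x in Ω, ENNReal.ofReal (|a x / lam| ^ q x) ≤ 1)
    (hbfin : ∃ lam > (0 : ℝ), ∫⁻ x in Ω, ENNReal.ofReal (|b x / lam| ^ q x) ≤ 1)
    (C : ℝ) (hC : 0 < C)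
    (hembed : ∀ u, memX0 N p s Ω u →
      luxNorm Ω (fun x => p (x, x)) u ≤ C * fracNorm N p s u) :
    ∀ R : ℝ, ∃ ρ > (0 : ℝ), ∀ u v : EuclideanSpace ℝ (Fin N) → ℝ,
      memX0 N p s Ω u → memX0 N p s Ω v →
      ρ ≤ fracNorm N p s u + fracNorm N p s v →
      R ≤ energy N p s Ω M₁ M₂ H a b u v :=
  energy_coercive_general N Ω hΩopen hΩbdd p s hpc hpinf hpbdd m γ hm hγ M₁ M₂ hM₁low hM₂low hM₁int
    hM₂int H hHbdd q hq a b hafin hbfin C hC hembed
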